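/- Let n ≥ 2, let Ω ⊆ ℝⁿ be open, let Ψ̄ : ℝⁿ∖{0} → ℝ be C² and positively one-homogeneous (Ψ̄(tp) = t·Ψ̄(p) for t > 0), let F : ℝ → ℝ be C², let H be C² on an interval containing w(Ω) with H' > 0, and let w : Ω → ℝ be C² with ∇w(x) ≠ 0 for all x ∈ Ω. Set u = H∘w and Ψ = F∘Ψ̄. Then for every x ∈ Ω: ∑_{i,j} Ψ_ij(∇u)·u_ij = F'(H'(w)·Ψ̄(∇w))·∑_{i,j} Ψ̄_ij(∇w)·w_ij + F''(H'(w)·Ψ̄(∇w))·H''(w)·Ψ̄(∇w)² + F''(H'(w)·Ψ̄(∇w))·H'(w)·∑_{i,j} Ψ̄_i(∇w)·Ψ̄_j(∇w)·w_ij, where subscripts of Ψ, Ψ̄ denote partial derivatives in the gradient variable evaluated as indicated, and subscripts of u, w denote second partial derivatives in x. -/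

import Mathlib

open scoped Topology

/-! Both Hessians split by the one-variable chain rule: `D²u = H''(w) ∇w ⊗ ∇w + H'(w) D²w`, and,
since `∇u = H'(w) ∇w` is a positive multiple of `p = ∇w`, the homogeneity of `Ψ̄` turns
`D²Ψ(∇u)` into `F'' ∇Ψ̄(p) ⊗ ∇Ψ̄(p) + F' H'(w)⁻¹ D²Ψ̄(p)`. In the pairing of the two, Euler's
relations `D²Ψ̄(p) p = 0` and `∇Ψ̄(p) · p = Ψ̄(p)` kill the cross term and produce `Ψ̄(∇w)²`, and
`H'(w)⁻¹` cancels against the factor `H'(w)` of `D²w`. -/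

/-- The standard basis vector `eᵢ` of `ℝⁿ`. -/
noncomputable def ee (n : ℕ) (i : Fin n) : EuclideanSpace ℝ (Fin n) :=
  EuclideanSpace.single i 1

/-- The gradient vector of `w` at `x`, with components the partial derivatives. -/
noncomputable def gradVec (n : ℕ) (w : EuclideanSpace ℝ (Fin n) → ℝ)
    (x : EuclideanSpace ℝ (Fin n)) : EuclideanSpace ℝ (Fin n) :=
  (EuclideanSpace.equiv (Fin n) ℝ).symm fun i => fderiv ℝ w x (ee n i)

section ScalarComp

variable {𝕜 E : Type*} [NontriviallyNormedField 𝕜] [NormedAddCommGroup E] [NormedSpace 𝕜 E]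

theorem iteratedFDeriv_two_apply_vecCons {F : Type*} [NormedAddCommGroup F] [NormedSpace 𝕜 F]
    (f : E → F) (z v v' : E) :
    iteratedFDeriv 𝕜 2 f z ![v, v'] = fderiv 𝕜 (fderiv 𝕜 f) z v v' := by
  simp [iteratedFDeriv_two_apply]

variable {φ : 𝕜 → 𝕜} {f : E → 𝕜} {x : E}

theorem fderiv_scalar_comp (hφ : DifferentiableAt 𝕜 φ (f x)) (hf : DifferentiableAt 𝕜 f x) :
    fderiv 𝕜 (fun y => φ (f y)) x = deriv φ (f x) • fderiv 𝕜 f x :=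
  (hφ.hasDerivAt.comp_hasFDerivAt x hf.hasFDerivAt).fderiv

theorem fderiv_fderiv_scalar_comp_apply (hφ : ContDiffAt 𝕜 2 φ (f x)) (hf : ContDiffAt 𝕜 2 f x)
    (v v' : E) :
    fderiv 𝕜 (fderiv 𝕜 fun y => φ (f y)) x v v' =
      deriv (deriv φ) (f x) * (fderiv 𝕜 f x v * fderiv 𝕜 f x v') +
        deriv φ (f x) * fderiv 𝕜 (fderiv 𝕜 f) x v v' := by
  have hfd : ∀ᶠ y in 𝓝 x, DifferentiableAt 𝕜 f y :=
    (hf.eventually (by simp)).mono fun y hy => hy.differentiableAt two_ne_zero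
  have hφd : ∀ᶠ y in 𝓝 x, DifferentiableAt 𝕜 φ (f y) :=
    hf.continuousAt.eventually <|
      (hφ.eventually (by simp)).mono fun s hs => hs.differentiableAt two_ne_zero
  have hgrad : fderiv 𝕜 (fun y => φ (f y)) =ᶠ[𝓝 x] fun y => deriv φ (f y) • fderiv 𝕜 f y :=
    (hφd.and hfd).mono fun y hy => fderiv_scalar_comp hy.1 hy.2
  have hφ' : DifferentiableAt 𝕜 (deriv φ) (f x) :=
    (hφ.derivWithin (m := 1) (by norm_num)).differentiableAt one_ne_zero
  have hf' : DifferentiableAt 𝕜 (fderiv 𝕜 f) x :=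
    (hf.fderiv_right (m := 1) (by norm_num)).differentiableAt one_ne_zero
  have hfx : DifferentiableAt 𝕜 f x := hf.differentiableAt two_ne_zero
  have hφ'f : DifferentiableAt 𝕜 (fun y => deriv φ (f y)) x := hφ'.comp x hfx
  rw [hgrad.fderiv_eq, fderiv_fun_smul hφ'f hf', fderiv_scalar_comp hφ' hfx]
  simp only [add_apply, smul_apply, ContinuousLinearMap.smulRight_apply, smul_eq_mul]
  ring

end ScalarComp

section Homogeneous

variable {E F : Type*} [NormedAddCommGroup E] [NormedSpace ℝ E] [NormedAddCommGroup F]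
  [NormedSpace ℝ F]

theorem HasFDerivAt.hasDerivAt_smul_one {g : E → F} {g' : E →L[ℝ] F} {p : E}
    (hg : HasFDerivAt g g' p) : HasDerivAt (fun s : ℝ => g (s • p)) (g' p) 1 := by
  have hray : HasDerivAt (fun s : ℝ => s • p) p 1 := by
    simpa using (hasDerivAt_id (1 : ℝ)).smul_const p
  exact (one_smul ℝ p ▸ hg).comp_hasDerivAt 1 hray

variable {Ψ : E → ℝ} {p : E}

theorem fderiv_smul_of_homogeneous (hΨ : DifferentiableOn ℝ Ψ {q | q ≠ 0})
    (hom : ∀ t > (0 : ℝ), ∀ q : E, q ≠ 0 → Ψ (t • q) = t * Ψ q) {t : ℝ} (ht : 0 < t)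
    (hp : p ≠ 0) : fderiv ℝ Ψ (t • p) = fderiv ℝ Ψ p := by
  have hhom : (fun y => Ψ (t • y)) =ᶠ[𝓝 p] fun y => t * Ψ y :=
    Filter.eventually_of_mem (isOpen_ne.mem_nhds hp) fun y hy => hom t ht y hy
  refine smul_right_injective (E →L[ℝ] ℝ) ht.ne' ?_
  calc t • fderiv ℝ Ψ (t • p) = fderiv ℝ (fun y => Ψ (t • y)) p := (fderiv_comp_smul t).symm
    _ = t • fderiv ℝ Ψ p := by
      rw [hhom.fderiv_eq, fderiv_const_mul (hΨ.differentiableAt (isOpen_ne.mem_nhds hp))]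

theorem fderiv_fderiv_smul_of_homogeneous (hΨ : ContDiffOn ℝ 2 Ψ {q | q ≠ 0})
    (hom : ∀ t > (0 : ℝ), ∀ q : E, q ≠ 0 → Ψ (t • q) = t * Ψ q) {t : ℝ} (ht : 0 < t)
    (hp : p ≠ 0) : fderiv ℝ (fderiv ℝ Ψ) (t • p) = t⁻¹ • fderiv ℝ (fderiv ℝ Ψ) p := by
  have hgrad : (fun y => fderiv ℝ Ψ (t • y)) =ᶠ[𝓝 p] fderiv ℝ Ψ :=
    Filter.eventually_of_mem (isOpen_ne.mem_nhds hp) fun y hy =>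
      fderiv_smul_of_homogeneous (hΨ.differentiableOn two_ne_zero) hom ht hy
  rw [eq_inv_smul_iff₀ ht.ne', ← fderiv_comp_smul t, hgrad.fderiv_eq]

theorem fderiv_apply_self_of_homogeneous (hΨ : DifferentiableAt ℝ Ψ p)
    (hom : ∀ t > (0 : ℝ), ∀ q : E, q ≠ 0 → Ψ (t • q) = t * Ψ q) (hp : p ≠ 0) :
    fderiv ℝ Ψ p p = Ψ p := by
  have hray : (fun s : ℝ => Ψ (s • p)) =ᶠ[𝓝 1] fun s => s * Ψ p :=
    Filter.eventually_of_mem (Ioi_mem_nhds one_pos) fun s hs => hom s hs p hp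
  refine hΨ.hasFDerivAt.hasDerivAt_smul_one.unique ?_
  simpa using ((hasDerivAt_id (1 : ℝ)).mul_const (Ψ p)).congr_of_eventuallyEq hray

theorem fderiv_fderiv_apply_self_of_homogeneous (hΨ : ContDiffOn ℝ 2 Ψ {q | q ≠ 0})
    (hom : ∀ t > (0 : ℝ), ∀ q : E, q ≠ 0 → Ψ (t • q) = t * Ψ q) (hp : p ≠ 0) :
    fderiv ℝ (fderiv ℝ Ψ) p p = 0 := by
  have hray : (fun s : ℝ => fderiv ℝ Ψ (s • p)) =ᶠ[𝓝 1] fun _ => fderiv ℝ Ψ p :=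
    Filter.eventually_of_mem (Ioi_mem_nhds one_pos) fun s hs =>
      fderiv_smul_of_homogeneous (hΨ.differentiableOn two_ne_zero) hom hs hp
  have hd : DifferentiableAt ℝ (fderiv ℝ Ψ) p :=
    ((hΨ.fderiv_of_isOpen isOpen_ne (m := 1) (by norm_num)).differentiableOn
      one_ne_zero).differentiableAt (isOpen_ne.mem_nhds hp)
  exact hd.hasFDerivAt.hasDerivAt_smul_one.unique
    ((hasDerivAt_const 1 (fderiv ℝ Ψ p)).congr_of_eventuallyEq hray)

theorem fderiv_fderiv_comp_smul_of_homogeneous {F : ℝ → ℝ} {t : ℝ}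
    (hF : ContDiffAt ℝ 2 F (t * Ψ p)) (hΨ : ContDiffOn ℝ 2 Ψ {q | q ≠ 0})
    (hom : ∀ t > (0 : ℝ), ∀ q : E, q ≠ 0 → Ψ (t • q) = t * Ψ q) (ht : 0 < t) (hp : p ≠ 0)
    (v v' : E) :
    fderiv ℝ (fderiv ℝ fun q => F (Ψ q)) (t • p) v v' =
      deriv (deriv F) (t * Ψ p) * (fderiv ℝ Ψ p v * fderiv ℝ Ψ p v') +
        deriv F (t * Ψ p) * (t⁻¹ * fderiv ℝ (fderiv ℝ Ψ) p v v') := by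
  have hΨ_tp : ContDiffAt ℝ 2 Ψ (t • p) :=
    hΨ.contDiffAt (isOpen_ne.mem_nhds (smul_ne_zero ht.ne' hp))
  rw [fderiv_fderiv_scalar_comp_apply (hom t ht p hp ▸ hF) hΨ_tp, hom t ht p hp,
    fderiv_smul_of_homogeneous (hΨ.differentiableOn two_ne_zero) hom ht hp,
    fderiv_fderiv_smul_of_homogeneous hΨ hom ht hp]
  rfl

end Homogeneous

section Coordinates

variable {n : ℕ}

theorem gradVec_apply (w : EuclideanSpace ℝ (Fin n) → ℝ) (x : EuclideanSpace ℝ (Fin n))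
    (i : Fin n) : gradVec n w x i = fderiv ℝ w x (ee n i) := rfl

theorem sum_smul_ee (p : EuclideanSpace ℝ (Fin n)) : ∑ i, p i • ee n i = p := by
  simpa [ee] using (EuclideanSpace.basisFun (Fin n) ℝ).sum_repr p

theorem ContinuousLinearMap.apply_eq_sum_ee {F : Type*} [AddCommGroup F] [Module ℝ F]
    [TopologicalSpace F] (L : EuclideanSpace ℝ (Fin n) →L[ℝ] F) (p : EuclideanSpace ℝ (Fin n)) :
    L p = ∑ i, p i • L (ee n i) := by
  conv_lhs => rw [← sum_smul_ee p]
  simp only [map_sum, map_smul]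

theorem ContinuousLinearMap.apply_apply_eq_sum_ee
    (M : EuclideanSpace ℝ (Fin n) →L[ℝ] EuclideanSpace ℝ (Fin n) →L[ℝ] ℝ)
    (p q : EuclideanSpace ℝ (Fin n)) :
    M p q = ∑ i, p i * ∑ j, q j * M (ee n i) (ee n j) := by
  simp only [M.apply_eq_sum_ee p, sum_apply, smul_apply, smul_eq_mul,
    fun i => (M (ee n i)).apply_eq_sum_ee q]

theorem gradVec_ne_zero {w : EuclideanSpace ℝ (Fin n) → ℝ} {x : EuclideanSpace ℝ (Fin n)}
    (h : fderiv ℝ w x ≠ 0) : gradVec n w x ≠ 0 := by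
  refine fun h0 => h (ContinuousLinearMap.ext fun p => ?_)
  have hpartial : ∀ i, fderiv ℝ w x (ee n i) = 0 := fun i => by
    rw [← gradVec_apply, h0, WithLp.ofLp_zero, Pi.zero_apply]
  simp [ContinuousLinearMap.apply_eq_sum_ee _ p, hpartial]

theorem gradVec_comp {H : ℝ → ℝ} {w : EuclideanSpace ℝ (Fin n) → ℝ}
    {x : EuclideanSpace ℝ (Fin n)} (hH : DifferentiableAt ℝ H (w x))
    (hw : DifferentiableAt ℝ w x) :
    gradVec n (fun y => H (w y)) x = deriv H (w x) • gradVec n w x := by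
  ext i
  simp [gradVec_apply, fderiv_scalar_comp hH hw]

end Coordinates

-- `A ⊗ A`, `B`, `W` stand for `∇Ψ̄(p) ⊗ ∇Ψ̄(p)`, `D²Ψ̄(p)`, `D²w`; `hB` for `D²Ψ̄(p)(p, p) = 0`.
theorem sum_sum_rankOne_add_mul_rankOne_add {ι : Type*} [Fintype ι] (a b c t : ℝ) (ht : t ≠ 0)
    (A p : ι → ℝ) (B W : ι → ι → ℝ) (hB : ∑ i, p i * ∑ j, p j * B i j = 0) :
    ∑ i, ∑ j, (a * (A i * A j) + b * (t⁻¹ * B i j)) * (c * (p i * p j) + t * W i j) =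
      b * ∑ i, ∑ j, B i j * W i j + a * c * (∑ i, p i * A i) ^ 2 +
        a * t * ∑ i, ∑ j, A i * A j * W i j := by
  have hterm : ∀ i j,
      (a * (A i * A j) + b * (t⁻¹ * B i j)) * (c * (p i * p j) + t * W i j) =
        b * (B i j * W i j) + a * c * (p i * A i * (p j * A j)) + a * t * (A i * A j * W i j) +
          b * c * t⁻¹ * (p i * (p j * B i j)) := by
    intro i j
    field_simp
    ring
  simp only [hterm, Finset.sum_add_distrib, ← Finset.mul_sum, sq, Finset.sum_mul_sum, hB]
  ring

theorem restacking_decomposition_general (n : ℕ)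
    (Ω : Set (EuclideanSpace ℝ (Fin n))) (hΩ : IsOpen Ω)
    (Ψb : EuclideanSpace ℝ (Fin n) → ℝ)
    (hΨb_C2 : ContDiffOn ℝ 2 Ψb {p : EuclideanSpace ℝ (Fin n) | p ≠ 0})
    (hΨb_homog : ∀ t > (0 : ℝ), ∀ p : EuclideanSpace ℝ (Fin n), p ≠ 0 →
      Ψb (t • p) = t * Ψb p)
    (F : ℝ → ℝ) (hF : ContDiff ℝ 2 F)
    (J : Set ℝ) (hJ_open : IsOpen J)
    (H : ℝ → ℝ) (hH : ContDiffOn ℝ 2 H J)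
    (hH' : ∀ s ∈ J, 0 < deriv H s)
    (w : EuclideanSpace ℝ (Fin n) → ℝ) (hw_C2 : ContDiffOn ℝ 2 w Ω)
    (hw_range : ∀ x ∈ Ω, w x ∈ J)
    (hw_grad : ∀ x ∈ Ω, fderiv ℝ w x ≠ 0) :
    ∀ x ∈ Ω,
      ∑ i : Fin n, ∑ j : Fin n,
        iteratedFDeriv ℝ 2 (fun p => F (Ψb p)) (gradVec n (fun y => H (w y)) x)
            ![ee n i, ee n j] *
          iteratedFDeriv ℝ 2 (fun y => H (w y)) x ![ee n i, ee n j] =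
      deriv F (deriv H (w x) * Ψb (gradVec n w x)) *
        (∑ i : Fin n, ∑ j : Fin n,
          iteratedFDeriv ℝ 2 Ψb (gradVec n w x) ![ee n i, ee n j] *
            iteratedFDeriv ℝ 2 w x ![ee n i, ee n j]) +
      deriv (deriv F) (deriv H (w x) * Ψb (gradVec n w x)) * deriv (deriv H) (w x) *
        Ψb (gradVec n w x) ^ 2 +
      deriv (deriv F) (deriv H (w x) * Ψb (gradVec n w x)) * deriv H (w x) *
        (∑ i : Fin n, ∑ j : Fin n,
          fderiv ℝ Ψb (gradVec n w x) (ee n i) * fderiv ℝ Ψb (gradVec n w x) (ee n j) *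
            iteratedFDeriv ℝ 2 w x ![ee n i, ee n j]) := by
  intro x hx
  have hwx : ContDiffAt ℝ 2 w x := hw_C2.contDiffAt (hΩ.mem_nhds hx)
  have hHx : ContDiffAt ℝ 2 H (w x) := hH.contDiffAt (hJ_open.mem_nhds (hw_range x hx))
  set p := gradVec n w x
  set t := deriv H (w x)
  have hp : p ≠ 0 := gradVec_ne_zero (hw_grad x hx)
  have ht : 0 < t := hH' _ (hw_range x hx)
  have hgrad_u : gradVec n (fun y => H (w y)) x = t • p :=
    gradVec_comp (hHx.differentiableAt two_ne_zero) (hwx.differentiableAt two_ne_zero)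
  have heuler : ∑ i, p i * fderiv ℝ Ψb p (ee n i) = Ψb p := by
    rw [← fderiv_apply_self_of_homogeneous
      (hΨb_C2.contDiffAt (isOpen_ne.mem_nhds hp) |>.differentiableAt two_ne_zero) hΨb_homog hp,
      ContinuousLinearMap.apply_eq_sum_ee _ p]
    rfl
  have heuler2 : ∑ i, p i * ∑ j, p j * fderiv ℝ (fderiv ℝ Ψb) p (ee n i) (ee n j) = 0 := by
    rw [← ContinuousLinearMap.apply_apply_eq_sum_ee,
      fderiv_fderiv_apply_self_of_homogeneous hΨb_C2 hΨb_homog hp, zero_apply]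
  simp only [iteratedFDeriv_two_apply_vecCons, hgrad_u,
    fderiv_fderiv_scalar_comp_apply hHx hwx, ← gradVec_apply w x,
    fderiv_fderiv_comp_smul_of_homogeneous hF.contDiffAt hΨb_C2 hΨb_homog ht hp]
  rw [sum_sum_rankOne_add_mul_rankOne_add _ _ _ _ ht.ne' _ _ _ _ heuler2, heuler]

/-- **Chain-rule decomposition of the anisotropic operator under re-stacking**:
for `u = H ∘ w` and `Ψ = F ∘ Ψ̄` with `Ψ̄` positively one-homogeneous,
`Ψ_ij(∇u)u_ij = F'(H'(w)Ψ̄(∇w))·Ψ̄_ij(∇w)w_ij + F''(H'(w)Ψ̄(∇w))·H''(w)·Ψ̄(∇w)²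
 + F''(H'(w)Ψ̄(∇w))·H'(w)·Ψ̄_i(∇w)Ψ̄_j(∇w)w_ij`. -/
theorem restacking_decomposition (n : ℕ) (hn : 2 ≤ n)
    (Ω : Set (EuclideanSpace ℝ (Fin n))) (hΩ : IsOpen Ω)
    (Ψb : EuclideanSpace ℝ (Fin n) → ℝ)
    (hΨb_C2 : ContDiffOn ℝ 2 Ψb {p : EuclideanSpace ℝ (Fin n) | p ≠ 0})
    (hΨb_homog : ∀ t > (0 : ℝ), ∀ p : EuclideanSpace ℝ (Fin n), p ≠ 0 →
      Ψb (t • p) = t * Ψb p)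
    (F : ℝ → ℝ) (hF : ContDiff ℝ 2 F)
    (J : Set ℝ) (hJ_open : IsOpen J) (hJ_conn : J.OrdConnected)
    (H : ℝ → ℝ) (hH : ContDiffOn ℝ 2 H J)
    (hH' : ∀ s ∈ J, 0 < deriv H s)
    (w : EuclideanSpace ℝ (Fin n) → ℝ) (hw_C2 : ContDiffOn ℝ 2 w Ω)
    (hw_range : ∀ x ∈ Ω, w x ∈ J)
    (hw_grad : ∀ x ∈ Ω, fderiv ℝ w x ≠ 0) :
    ∀ x ∈ Ω,
      ∑ i : Fin n, ∑ j : Fin n,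
        iteratedFDeriv ℝ 2 (fun p => F (Ψb p)) (gradVec n (fun y => H (w y)) x)
            ![ee n i, ee n j] *
          iteratedFDeriv ℝ 2 (fun y => H (w y)) x ![ee n i, ee n j] =
      deriv F (deriv H (w x) * Ψb (gradVec n w x)) *
        (∑ i : Fin n, ∑ j : Fin n,
          iteratedFDeriv ℝ 2 Ψb (gradVec n w x) ![ee n i, ee n j] *
            iteratedFDeriv ℝ 2 w x ![ee n i, ee n j]) +
      deriv (deriv F) (deriv H (w x) * Ψb (gradVec n w x)) * deriv (deriv H) (w x) *
        Ψb (gradVec n w x) ^ 2 +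
      deriv (deriv F) (deriv H (w x) * Ψb (gradVec n w x)) * deriv H (w x) *
        (∑ i : Fin n, ∑ j : Fin n,
          fderiv ℝ Ψb (gradVec n w x) (ee n i) * fderiv ℝ Ψb (gradVec n w x) (ee n j) *
            iteratedFDeriv ℝ 2 w x ![ee n i, ee n j]) :=
  restacking_decomposition_general n Ω hΩ Ψb hΨb_C2 hΨb_homog F hF J hJ_open H hH hH' w hw_C2
    hw_range hw_grad
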